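/- arXiv:1309.4818 — 4 statements merged into one kernel-verified Lean document; each statement's English description precedes it below -/
import Mathlib

section
/- Let α and e be epsilon numbers and x an ordinal with x < α. Then x[α := e] = x, i.e., substituting α by e in the Cantor normal form of x leaves x unchanged. -/
open Ordinal

def IsEps (x : Ordinal.{0}) : Prop := omega0 ^ x = x

/-- Substitution of the epsilon number `α` by the epsilon number `e` in the
iterated Cantor normal form of `x`. -/
noncomputable def subst (α e : Ordinal.{0}) (x : Ordinal.{0}) : Ordinal.{0} :=
  if h : omega0 ^ x = x then (if x = α then e else x)
  else ((CNF omega0 x).attach.map (fun p => omega0 ^ (subst α e p.1.1) * p.1.2)).sum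
termination_by x
decreasing_by
  have hx0 : x ≠ 0 := by
    rintro rfl
    have := p.2
    simp [Ordinal.CNF.zero_right] at this
  have hle := Ordinal.CNF.fst_le_log p.2
  have hlt : Ordinal.log omega0 x < x := by
    have h1 : x < omega0 ^ x :=
      lt_of_le_of_ne (Ordinal.right_le_opow x one_lt_omega0) (Ne.symm h)
    exact (Ordinal.lt_opow_iff_log_lt one_lt_omega0 hx0).mp h1
  exact lt_of_le_of_lt hle hlt

/-!
Induction on `x`. An epsilon number below `α` is not `α`, so it is left alone. Any other `x`
satisfies `x < ω ^ x`, so its Cantor normal form exponents lie below `x` and are fixed by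
induction; the substitution then just reassembles the Cantor normal form sum of `x`.
-/

theorem CNF_fst_lt_of_not_isEps {x : Ordinal} (hx : ¬IsEps x) {p : Ordinal × Ordinal}
    (hp : p ∈ CNF omega0 x) : p.1 < x := by
  have hx0 : x ≠ 0 := by
    rintro rfl
    simp [CNF.zero_right] at hp
  have hlt : x < omega0 ^ x := (right_le_opow x one_lt_omega0).lt_of_ne (Ne.symm hx)
  exact (CNF.fst_le_log hp).trans_lt ((lt_opow_iff_log_lt one_lt_omega0 hx0).mp hlt)

theorem CNF_sum_eq_self (x : Ordinal) :
    ((CNF omega0 x).map fun p => omega0 ^ p.1 * p.2).sum = x := by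
  rw [List.sum_eq_foldr, List.foldr_map]
  exact CNF.foldr omega0 x

theorem subst_of_isEps {α e x : Ordinal} (hx : IsEps x) :
    subst α e x = if x = α then e else x := by
  rw [subst, dif_pos (show omega0 ^ x = x from hx)]

theorem subst_eq_self_of_not_isEps {α e x : Ordinal} (hx : ¬IsEps x)
    (hfix : ∀ p ∈ CNF omega0 x, subst α e p.1 = p.1) : subst α e x = x := by
  rw [subst, dif_neg (show ¬omega0 ^ x = x from hx)]
  conv_rhs => rw [← CNF_sum_eq_self x]
  rw [List.map_congr_left fun p _ => by rw [hfix p.1 p.2]]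
  exact congrArg List.sum
    (List.attach_map_val (f := fun p : Ordinal × Ordinal => omega0 ^ p.1 * p.2))

theorem subst_eq_self_of_lt_general (α e x : Ordinal.{0})
    (hx : x < α) : subst α e x = x := by
  induction x using WellFoundedLT.induction with
  | ind x ih =>
    by_cases hxε : IsEps x
    · rw [subst_of_isEps hxε, if_neg hx.ne]
    · refine subst_eq_self_of_not_isEps hxε fun p hp => ?_
      have hpx := CNF_fst_lt_of_not_isEps hxε hp
      exact ih p.1 hpx (hpx.trans hx)

/-- Substituting α by e in the Cantor normal form of x < α leaves x unchanged. -/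
theorem subst_eq_self_of_lt (α e x : Ordinal.{0}) (hα : IsEps α) (he : IsEps e)
    (hx : x < α) : subst α e x = x :=
  subst_eq_self_of_lt_general α e x hx
end

section
/- Let α, e be epsilon numbers and define M(α, e) := {q < α⁺ : Ep(q) ∩ α ⊆ e}. Then M(α, e) is closed under ordinal addition, ordinal multiplication, and the map x ↦ ω^x. -/
/-
`Ep q` is the union of `Ep E` over the exponents `E` of the Cantor normal form of `q` (for an
epsilon number `q` the only exponent is `q` itself). The exponents of `q + s` are among those of
`q` and of `s`, and `q * ω ^ b = ω ^ (log q + b)` for `b ≠ 0`; splitting `s` into its CNF terms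
then gives `Ep (q + s) ⊆ Ep q ∪ Ep s`, `Ep (q * s) ⊆ Ep q ∪ Ep s` and `Ep (ω ^ q) = Ep q`, so the
condition `Ep ∩ α ⊆ e` passes to `q + s`, `q * s` and `ω ^ q`. The bound `< α⁺` is kept because
`α⁺` is an epsilon number, hence closed under `+`, `*` and `ω ^ ·`.
-/

open Ordinal

noncomputable def nextEps (x : Ordinal.{0}) : Ordinal.{0} := sInf {e | IsEps e ∧ x < e}

inductive InEp : Ordinal.{0} → Ordinal.{0} → Prop
  | self (x : Ordinal.{0}) (h : omega0 ^ x = x) : InEp x x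
  | exp (x e c y : Ordinal.{0}) (h : omega0 ^ x ≠ x) (hm : (e, c) ∈ CNF omega0 x)
      (hy : InEp y e) : InEp y x

/-- The set of epsilon numbers appearing in the iterated Cantor normal form of `x`. -/
def Ep (x : Ordinal.{0}) : Set Ordinal.{0} := {y | InEp y x}

def MSet (α e : Ordinal.{0}) : Set Ordinal.{0} :=
  {q | q < nextEps α ∧ Ep q ∩ Set.Iio α ⊆ Set.Iio e}

namespace Ordinal

theorem CNF_omega0_opow (x : Ordinal) : CNF ω (ω ^ x) = [(x, 1)] := by
  simpa using
    CNF.opow_mul_add (e := x) one_lt_omega0 one_ne_zero one_lt_omega0 (opow_pos x omega0_pos)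

theorem CNF_exponents_of_ne_zero {x : Ordinal} (hx : x ≠ 0) :
    (CNF ω x).map Prod.fst = log ω x :: (CNF ω (x % ω ^ log ω x)).map Prod.fst := by
  rw [CNF.ne_zero hx, List.map_cons]

theorem CNF_exponents_opow_mul_add {e c y : Ordinal} (hc : c ≠ 0) (hcω : c < ω)
    (hy : y < ω ^ e) : (CNF ω (ω ^ e * c + y)).map Prod.fst = e :: (CNF ω y).map Prod.fst := by
  rw [CNF.opow_mul_add one_lt_omega0 hc hcω hy, List.map_cons]

theorem CNF_exponents_add_subset (q s : Ordinal) :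
    (CNF ω (q + s)).map Prod.fst ⊆ (CNF ω q).map Prod.fst ++ (CNF ω s).map Prod.fst := by
  induction q using WellFoundedLT.induction generalizing s with
  | _ q IH =>
  rcases eq_or_ne q 0 with rfl | hq
  · simp
  rcases eq_or_ne s 0 with rfl | hs
  · simp
  set L := log ω q
  have hωL : (ω : Ordinal) ^ L ≠ 0 := opow_ne_zero _ omega0_ne_zero
  have hc : q / ω ^ L ≠ 0 := ((div_pos hωL).2 (opow_log_le_self ω hq)).ne'
  have hcω : q / ω ^ L < ω := div_opow_log_lt q one_lt_omega0
  have hq_eq : q = ω ^ L * (q / ω ^ L) + q % ω ^ L := (div_add_mod q _).symm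
  rcases lt_trichotomy L (log ω s) with hlt | heq | hgt
  · have hqs : q + s = s := by
      refine add_of_omega0_opow_le ?_ (opow_log_le_self ω hs)
      exact (lt_opow_succ_log_self one_lt_omega0 q).trans_le
        (opow_le_opow_right omega0_pos (Order.succ_le_of_lt hlt))
    rw [hqs]
    exact List.subset_append_right _ _
  · have hs_eq : s = ω ^ L * (s / ω ^ L) + s % ω ^ L := (div_add_mod s _).symm
    have hc' : 0 < s / ω ^ L := (div_pos hωL).2 (heq ▸ opow_log_le_self ω hs)
    have hsum : q + s = ω ^ L * (q / ω ^ L + s / ω ^ L) + s % ω ^ L := by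
      have hr : q % ω ^ L + ω ^ L * (s / ω ^ L) = ω ^ L * (s / ω ^ L) :=
        add_of_omega0_opow_le (mod_lt q hωL) (le_mul_left _ hc')
      conv_lhs => rw [hq_eq, hs_eq]
      rw [add_assoc, ← add_assoc (q % _), hr, ← add_assoc, ← mul_add]
    rw [hsum, CNF_exponents_opow_mul_add (by simp [hc])
      (isPrincipal_add_omega0 hcω (heq ▸ div_opow_log_lt s one_lt_omega0)) (mod_lt s hωL),
      CNF_exponents_of_ne_zero hq, CNF_exponents_of_ne_zero hs, ← heq]
    exact List.cons_subset_cons _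
      (List.subset_append_of_subset_right _ (List.subset_cons_self _ _))
  · have hsL : s < ω ^ L := (lt_opow_succ_log_self one_lt_omega0 s).trans_le
      (opow_le_opow_right omega0_pos (Order.succ_le_of_lt hgt))
    have hsum : q + s = ω ^ L * (q / ω ^ L) + (q % ω ^ L + s) := by
      conv_lhs => rw [hq_eq]
      rw [add_assoc]
    have hr : q % ω ^ L < q := (mod_lt q hωL).trans_le (opow_log_le_self ω hq)
    rw [hsum, CNF_exponents_opow_mul_add hc hcω (isPrincipal_add_omega0_opow L (mod_lt q hωL) hsL),
      CNF_exponents_of_ne_zero hq]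
    exact List.cons_subset_cons _ (IH _ hr s)

theorem mul_omega0_opow_of_ne_zero {q b : Ordinal} (hq : q ≠ 0) (hb : b ≠ 0) :
    q * ω ^ b = ω ^ (log ω q + b) := by
  obtain ⟨c, rfl⟩ : ∃ c, b = 1 + c :=
    ⟨b - 1, (Ordinal.add_sub_cancel_of_le (Order.one_le_iff_ne_zero.2 hb)).symm⟩
  rw [opow_add, opow_one, ← mul_assoc,
    mul_eq_opow_log_succ hq isPrincipal_mul_omega0 (natCast_lt_omega0 2), Order.succ_eq_add_one,
    ← opow_add, add_assoc]

end Ordinal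

theorem mem_Ep {x y : Ordinal} : y ∈ Ep x ↔ InEp y x := Iff.rfl

theorem Ep_eq_biUnion (x : Ordinal) : Ep x = ⋃ E ∈ (CNF ω x).map Prod.fst, Ep E := by
  by_cases hx : IsEps x
  · have hCNF : (CNF ω x).map Prod.fst = [x] := by
      conv_lhs => rw [← hx]
      rw [CNF_omega0_opow, List.map_singleton]
    simp [hCNF]
  ext y
  simp only [mem_Ep, Set.mem_iUnion, List.mem_map, Prod.exists, exists_and_right,
    exists_eq_right, exists_prop]
  constructor
  · rintro (⟨_, h⟩ | ⟨_, E, c, _, _, hm, hy⟩)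
    · exact absurd h hx
    · exact ⟨E, ⟨c, hm⟩, hy⟩
  · rintro ⟨E, ⟨c, hm⟩, hy⟩
    exact InEp.exp x E c y hx hm hy

theorem Ep_subset_of_mem_exponents {x E : Ordinal} (hE : E ∈ (CNF ω x).map Prod.fst) :
    Ep E ⊆ Ep x := by
  rw [Ep_eq_biUnion x]
  exact Set.subset_iUnion₂ (s := fun E _ => Ep E) E hE

@[simp]
theorem Ep_zero : Ep 0 = ∅ := by
  simp [Ep_eq_biUnion 0, CNF.zero_right]

@[simp]
theorem Ep_omega0_opow (x : Ordinal) : Ep (ω ^ x) = Ep x := by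
  simp [Ep_eq_biUnion (ω ^ x), CNF_omega0_opow]

theorem Ep_log_subset (x : Ordinal) : Ep (log ω x) ⊆ Ep x := by
  rcases eq_or_ne x 0 with rfl | hx
  · simp
  refine Ep_subset_of_mem_exponents ?_
  rw [CNF_exponents_of_ne_zero hx]
  exact List.mem_cons_self

theorem Ep_mod_opow_log_subset (x : Ordinal) : Ep (x % ω ^ log ω x) ⊆ Ep x := by
  rcases eq_or_ne x 0 with rfl | hx
  · simp
  rw [Ep_eq_biUnion (x % _)]
  refine Set.iUnion₂_subset fun E hE => Ep_subset_of_mem_exponents ?_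
  rw [CNF_exponents_of_ne_zero hx]
  exact List.mem_cons_of_mem _ hE

theorem Ep_add_subset (q s : Ordinal) : Ep (q + s) ⊆ Ep q ∪ Ep s := by
  rw [Ep_eq_biUnion (q + s)]
  refine Set.iUnion₂_subset fun E hE => ?_
  rcases List.mem_append.1 (CNF_exponents_add_subset q s hE) with h | h
  · exact (Ep_subset_of_mem_exponents h).trans Set.subset_union_left
  · exact (Ep_subset_of_mem_exponents h).trans Set.subset_union_right

theorem Ep_mul_omega0_opow_subset (q b : Ordinal) : Ep (q * ω ^ b) ⊆ Ep q ∪ Ep b := by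
  rcases eq_or_ne q 0 with rfl | hq
  · simp
  rcases eq_or_ne b 0 with rfl | hb
  · simp
  rw [mul_omega0_opow_of_ne_zero hq hb, Ep_omega0_opow]
  exact (Ep_add_subset _ _).trans (Set.union_subset_union_left _ (Ep_log_subset q))

theorem Ep_mul_natCast_subset (a : Ordinal) (n : ℕ) : Ep (a * n) ⊆ Ep a := by
  induction n with
  | zero => simp
  | succ n ih =>
    rw [Nat.cast_succ, mul_add_one]
    exact (Ep_add_subset _ _).trans (Set.union_subset ih subset_rfl)

theorem Ep_mul_subset (q s : Ordinal) : Ep (q * s) ⊆ Ep q ∪ Ep s := by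
  induction s using WellFoundedLT.induction with
  | _ s IH =>
  rcases eq_or_ne s 0 with rfl | hs
  · simp
  set L := log ω s
  have hωL : (ω : Ordinal) ^ L ≠ 0 := opow_ne_zero _ omega0_ne_zero
  obtain ⟨n, hn⟩ := lt_omega0.1 (div_opow_log_lt s one_lt_omega0)
  have hr : s % ω ^ L < s := (mod_lt s hωL).trans_le (opow_log_le_self ω hs)
  have hsplit : q * s = q * ω ^ L * n + q * (s % ω ^ L) := by
    conv_lhs => rw [← div_add_mod s (ω ^ L), hn]
    rw [mul_add, mul_assoc]
  rw [hsplit]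
  refine (Ep_add_subset _ _).trans (Set.union_subset ?_ ?_)
  · calc Ep (q * ω ^ L * n) ⊆ Ep (q * ω ^ L) := Ep_mul_natCast_subset _ n
      _ ⊆ Ep q ∪ Ep L := Ep_mul_omega0_opow_subset q L
      _ ⊆ Ep q ∪ Ep s := Set.union_subset_union_right _ (Ep_log_subset s)
  · exact (IH _ hr).trans (Set.union_subset_union_right _ (Ep_mod_opow_log_subset s))

theorem isEps_nextEps (α : Ordinal) : IsEps (nextEps α) :=
  (csInf_mem (s := {e | IsEps e ∧ α < e})
    ⟨nfp (ω ^ ·) (α + 1), nfp_fp (isNormal_opow one_lt_omega0) _,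
      (lt_add_one α).trans_le (le_nfp _ _)⟩).1

theorem IsEps.isPrincipal_add {x : Ordinal} (hx : IsEps x) : IsPrincipal (· + ·) x :=
  hx ▸ isPrincipal_add_omega0_opow x

theorem IsEps.isPrincipal_mul {x : Ordinal} (hx : IsEps x) : IsPrincipal (· * ·) x := by
  have h := isPrincipal_mul_omega0_opow_opow x
  rwa [hx, hx] at h

theorem IsEps.omega0_opow_lt {x a : Ordinal} (hx : IsEps x) (ha : a < x) : ω ^ a < x :=
  hx ▸ (opow_lt_opow_iff_right one_lt_omega0).2 ha

theorem mem_MSet_of_Ep_subset {α e p q s : Ordinal} (hp : p < nextEps α)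
    (hEp : Ep p ⊆ Ep q ∪ Ep s) (hq : q ∈ MSet α e) (hs : s ∈ MSet α e) : p ∈ MSet α e := by
  refine ⟨hp, fun y ⟨hy, hyα⟩ => ?_⟩
  rcases hEp hy with h | h
  · exact hq.2 ⟨h, hyα⟩
  · exact hs.2 ⟨h, hyα⟩

theorem MSet_closed_general (α e : Ordinal.{0}) :
    ∀ q ∈ MSet α e, ∀ s ∈ MSet α e,
      q + s ∈ MSet α e ∧ q * s ∈ MSet α e ∧ omega0 ^ q ∈ MSet α e := by
  intro q hq s hs
  have hε := isEps_nextEps α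
  exact ⟨mem_MSet_of_Ep_subset (hε.isPrincipal_add hq.1 hs.1) (Ep_add_subset q s) hq hs,
    mem_MSet_of_Ep_subset (hε.isPrincipal_mul hq.1 hs.1) (Ep_mul_subset q s) hq hs,
    mem_MSet_of_Ep_subset (hε.omega0_opow_lt hq.1) (by rw [Ep_omega0_opow, Set.union_self]) hq hq⟩

/-- M(α, e) is closed under ordinal addition, multiplication, and x ↦ ω^x. -/
theorem MSet_closed (α e : Ordinal.{0}) (hα : IsEps α) (he : IsEps e) :
    ∀ q ∈ MSet α e, ∀ s ∈ MSet α e,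
      q + s ∈ MSet α e ∧ q * s ∈ MSet α e ∧ omega0 ^ q ∈ MSet α e :=
  MSet_closed_general α e
end

section
/- Let α, e be epsilon numbers and s an ordinal with s < α⁺ and Ep(s) ∩ α ⊆ e. If s = a + c for ordinals a, c, then Ep(c) ∩ α ⊆ e. -/
open Ordinal

/-!
Every exponent in the Cantor normal form of `c` is one of `a + c`. Let `ω ^ L` be the leading
power of `s = a + c`. If `c < ω ^ L`, then `c` is a right summand of the remainder
`s % ω ^ L = a % ω ^ L + c < s`, and we conclude by induction. Otherwise `a % ω ^ L` is absorbed
by `c`, so `s` and `c` have the same leading exponent `L` and the same remainder.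
Membership in `Ep x` only depends on the exponents of the normal form of `x`, hence
`Ep c ⊆ Ep (a + c)`.
-/

theorem Ordinal.add_mod_eq_mod_add_mod (a c d : Ordinal) : (a + c) % d = (a % d + c) % d := by
  conv_lhs => rw [← div_add_mod a d, add_assoc, mul_add_mod_self]

theorem Ordinal.exists_mem_CNF_add {a c e k : Ordinal} (h : (e, k) ∈ CNF ω c) :
    ∃ k', (e, k') ∈ CNF ω (a + c) := by
  induction hs : a + c using WellFoundedLT.induction generalizing a c with
  | _ s IH =>
  have hc : c ≠ 0 := by rintro rfl; simp [CNF.zero_right] at h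
  have hs0 : s ≠ 0 := fun hs0 => hc (Ordinal.add_eq_zero_iff.1 (hs.trans hs0)).2
  set L := log ω s
  have hωL : ω ^ L ≤ s := opow_log_le_self ω hs0
  have hmod : s % ω ^ L = (a % ω ^ L + c) % ω ^ L := hs ▸ add_mod_eq_mod_add_mod a c _
  have hra : a % ω ^ L < ω ^ L := mod_lt a (opow_ne_zero L omega0_ne_zero)
  rw [CNF.ne_zero hs0]
  by_cases hcL : c < ω ^ L
  · have ht : a % ω ^ L + c < ω ^ L := isPrincipal_add_omega0_opow L hra hcL
    rw [mod_eq_of_lt ht] at hmod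
    obtain ⟨k', hk'⟩ := IH _ (ht.trans_le hωL) h rfl
    exact ⟨k', List.mem_cons_of_mem _ (hmod ▸ hk')⟩
  · push Not at hcL
    have hlog : log ω c = L :=
      le_antisymm (log_mono_right ω (hs ▸ le_add_self)) (le_log_of_opow_le one_lt_omega0 hcL)
    rw [add_of_omega0_opow_le hra hcL] at hmod
    rw [CNF.ne_zero hc, hlog, ← hmod, List.mem_cons] at h
    rcases h with h | h
    · obtain ⟨rfl, -⟩ := Prod.ext_iff.1 h
      exact ⟨_, List.mem_cons_self⟩
    · exact ⟨k, List.mem_cons_of_mem _ h⟩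

theorem Ordinal.CNF_omega0_of_opow_eq_self {x : Ordinal} (hx : ω ^ x = x) : CNF ω x = [(x, 1)] := by
  have := CNF.opow_mul_add (e := x) one_lt_omega0 one_ne_zero one_lt_omega0 (opow_pos x omega0_pos)
  rwa [mul_one, add_zero, hx, CNF.zero_right] at this

theorem inEp_iff_exists_mem_CNF {y x : Ordinal} :
    InEp y x ↔ ∃ e k, (e, k) ∈ CNF ω x ∧ InEp y e := by
  constructor
  · intro h
    cases h with
    | self _ hx => exact ⟨_, 1, by simp [CNF_omega0_of_opow_eq_self hx], InEp.self _ hx⟩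
    | exp _ e k _ _ hm hy => exact ⟨e, k, hm, hy⟩
  · rintro ⟨e, k, hm, hy⟩
    by_cases hx : ω ^ x = x
    · rw [CNF_omega0_of_opow_eq_self hx, List.mem_singleton, Prod.mk.injEq] at hm
      exact hm.1 ▸ hy
    · exact InEp.exp x e k y hx hm hy

theorem Ep_subset_Ep_add (a c : Ordinal) : Ep c ⊆ Ep (a + c) := by
  intro y hy
  obtain ⟨e, k, hm, hy⟩ := inEp_iff_exists_mem_CNF.1 hy
  obtain ⟨k', hm'⟩ := exists_mem_CNF_add (a := a) hm
  exact inEp_iff_exists_mem_CNF.2 ⟨e, k', hm', hy⟩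

theorem Ep_right_summand_general (α e s a c : Ordinal.{0})
    (hse : Ep s ∩ Set.Iio α ⊆ Set.Iio e)
    (hac : s = a + c) : Ep c ∩ Set.Iio α ⊆ Set.Iio e :=
  fun _ hy => hse ⟨hac ▸ Ep_subset_Ep_add a c hy.1, hy.2⟩

/-- If s < α⁺, Ep(s) ∩ α ⊆ e and s = a + c, then Ep(c) ∩ α ⊆ e. -/
theorem Ep_right_summand (α e s a c : Ordinal.{0}) (hα : IsEps α) (he : IsEps e)
    (hs : s < nextEps α) (hse : Ep s ∩ Set.Iio α ⊆ Set.Iio e)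
    (hac : s = a + c) : Ep c ∩ Set.Iio α ⊆ Set.Iio e :=
  Ep_right_summand_general α e s a c hse hac
end

section
/- Let α be an epsilon number and t an ordinal with t ≥ α. Then α·2 ≤ η(t). -/
open Ordinal

/-- `π t` is the leading additively principal term of the Cantor normal form of `t`. -/
noncomputable def piOrd (t : Ordinal.{0}) : Ordinal.{0} :=
  if t = 0 then 0 else omega0 ^ (Ordinal.log omega0 t)

/-- `d q` is the last exponent `Qₘ` of the CNF of `Q` when `q = ω^Q` is additively
principal, and `0` otherwise. -/
noncomputable def dOrd (q : Ordinal.{0}) : Ordinal.{0} :=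
  if omega0 ^ (Ordinal.log omega0 q) = q then
    (((CNF omega0 (Ordinal.log omega0 q)).getLast?).map Prod.fst).getD 0
  else 0

noncomputable def etaOrd (t : Ordinal.{0}) : Ordinal.{0} := max t (piOrd t + dOrd (piOrd t))

/-! If `α ≤ t < α·2`, then `t` lies in `[ω^α, ω^(α+1))`, so `π t = α`; and the CNF of the
exponent `α` is the single term `ω^α`, so `d α = α`. Hence `η t ≥ α + α = α·2`; otherwise
`α·2 ≤ t ≤ η t` directly. -/

theorem piOrd_eq_of_opow_le_of_lt {t a : Ordinal.{0}} (hle : omega0 ^ a ≤ t)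
    (hlt : t < omega0 ^ (a + 1)) : piOrd t = omega0 ^ a := by
  have ht : t ≠ 0 := ((opow_pos a omega0_pos).trans_le hle).ne'
  rw [piOrd, if_neg ht, (log_eq_iff one_lt_omega0 ht a).2 ⟨hle, hlt⟩]

namespace IsEps

variable {α : Ordinal.{0}}

theorem ne_zero (hα : IsEps α) : α ≠ 0 := by
  rintro rfl
  exact one_ne_zero ((opow_zero omega0).symm.trans hα)

theorem log_omega0 (hα : IsEps α) : log omega0 α = α := by
  conv_lhs => rw [← hα]
  exact log_opow one_lt_omega0 α

theorem CNF_omega0 (hα : IsEps α) : CNF omega0 α = [(α, 1)] := by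
  rw [CNF.ne_zero hα.ne_zero, hα.log_omega0, hα, Ordinal.div_self hα.ne_zero, Ordinal.mod_self,
    CNF.zero_right]

theorem dOrd_self (hα : IsEps α) : dOrd α = α := by
  rw [dOrd, hα.log_omega0, if_pos (show omega0 ^ α = α from hα), hα.CNF_omega0]
  rfl

theorem piOrd_eq_of_le_of_lt_mul_two {t : Ordinal.{0}} (hα : IsEps α) (hle : α ≤ t)
    (hlt : t < α * 2) : piOrd t = α := by
  have hmul : α * 2 ≤ omega0 ^ (α + 1) := by
    rw [← Order.succ_eq_add_one, opow_succ, hα]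
    exact mul_le_mul_right (natCast_lt_omega0 2).le α
  rw [piOrd_eq_of_opow_le_of_lt (hα.symm ▸ hle) (hlt.trans_le hmul), hα]

end IsEps

/-- If α is an epsilon number and t ≥ α, then α·2 ≤ η(t). -/
theorem eps_two_le_eta (α t : Ordinal.{0}) (hα : IsEps α) (ht : α ≤ t) :
    α * 2 ≤ etaOrd t := by
  rcases le_or_gt (α * 2) t with hle | hlt
  · exact hle.trans (le_max_left _ _)
  · calc α * 2 = α + dOrd α := by rw [Ordinal.mul_two, hα.dOrd_self]
      _ = piOrd t + dOrd (piOrd t) := by rw [hα.piOrd_eq_of_le_of_lt_mul_two ht hlt]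
      _ ≤ etaOrd t := le_max_right _ _
end
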